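/- Every edge of a matroid polytope is parallel to a vector of the form e_i − e_j for some i ≠ j. Conversely, a subpolytope of Δ(k,n) (the convex hull of a subset of its vertices) all of whose edges are parallel to vectors e_i − e_j has vertex set corresponding to the bases of a matroid of rank k on [n]. -/

import Mathlib

open scoped Classical

/-- The 0/1 indicator vector `e_σ` of a finite subset `σ` of `[n]`. -/
noncomputable def indicatorVec {n : ℕ} (σ : Finset (Fin n)) : Fin n → ℝ :=
  fun i => if i ∈ σ then 1 else 0

/-- The hypersimplex `Δ(k,n)`: the convex hull of the indicator vectors of
the `k`-subsets of `[n]`. -/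
noncomputable def hypersimplex (k n : ℕ) : Set (Fin n → ℝ) :=
  convexHull ℝ {x | ∃ σ : Finset (Fin n), σ.card = k ∧ x = indicatorVec σ}

open Set

/-- linear functional with weights `w` -/
noncomputable def lf {n : ℕ} (w : Fin n → ℝ) : (Fin n → ℝ) →ₗ[ℝ] ℝ where
  toFun x := ∑ i, w i * x i
  map_add' x y := by simp [mul_add, Finset.sum_add_distrib]
  map_smul' c x := by simp [Finset.mul_sum, mul_left_comm]

lemma lf_indicator {n : ℕ} (w : Fin n → ℝ) (σ : Finset (Fin n)) :
    lf w (indicatorVec σ) = ∑ i ∈ σ, w i := by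
  classical
  simp only [lf, LinearMap.coe_mk, AddHom.coe_mk, indicatorVec]
  rw [Finset.sum_congr rfl (fun x _ => (mul_ite _ _ _ _ : w x * _ = _))]
  simp [Finset.sum_ite_mem]

lemma indicatorVec_inj {n : ℕ} {σ σ' : Finset (Fin n)} (h : indicatorVec σ = indicatorVec σ') :
    σ = σ' := by
  classical
  ext m
  have := congrFun h m
  simp only [indicatorVec] at this
  by_cases hm : m ∈ σ <;> by_cases hm' : m ∈ σ' <;> simp [hm, hm'] at this ⊢

lemma indicatorVec_apply {n : ℕ} (σ : Finset (Fin n)) (i : Fin n) :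
    indicatorVec σ i = if i ∈ σ then 1 else 0 := rfl

variable {n : ℕ}

local notation "E" => (Fin n → ℝ)

lemma lin_both_eq {a b fa fb M : ℝ} (ha : 0 < a) (hb : 0 < b) (hab : a + b = 1)
    (h1 : fa ≤ M) (h2 : fb ≤ M) (h : a * fa + b * fb = M) : fa = M ∧ fb = M := by
  have hM : a * M + b * M = M := by rw [← add_mul, hab, one_mul]
  have k1 : a * (M - fa) = 0 := by nlinarith [mul_nonneg hb.le (sub_nonneg.2 h2)]
  have k2 : b * (M - fb) = 0 := by nlinarith [mul_nonneg ha.le (sub_nonneg.2 h1)]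
  constructor
  · rcases mul_eq_zero.1 k1 with h' | h'
    · exact absurd h' ha.ne'
    · linarith
  · rcases mul_eq_zero.1 k2 with h' | h'
    · exact absurd h' hb.ne'
    · linarith

lemma conv_le (V : Set E) (f : E →ₗ[ℝ] ℝ) (M : ℝ) (hb : ∀ y ∈ V, f y ≤ M) :
    ∀ x ∈ convexHull ℝ V, f x ≤ M := fun x hx =>
  convexHull_min hb (convex_halfSpace_le ⟨f.map_add, f.map_smul⟩ M) hx

lemma conv_ge (V : Set E) (f : E →ₗ[ℝ] ℝ) (M : ℝ) (hb : ∀ y ∈ V, M ≤ f y) :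
    ∀ x ∈ convexHull ℝ V, M ≤ f x := fun x hx =>
  convexHull_min hb (convex_halfSpace_ge ⟨f.map_add, f.map_smul⟩ M) hx

/-- representation lemma -/
lemma conv_rep {V : Set E} (hfin : V.Finite) {x : E} (hx : x ∈ convexHull ℝ V) :
    ∃ w : E → ℝ, (∀ y ∈ hfin.toFinset, 0 ≤ w y) ∧ ∑ y ∈ hfin.toFinset, w y = 1 ∧
      ∑ y ∈ hfin.toFinset, w y • y = x := by
  rw [← hfin.coe_toFinset, Finset.mem_convexHull'] at hx
  exact hx

lemma mem_face {V : Set E} (hfin : V.Finite) (f : E →ₗ[ℝ] ℝ) (M : ℝ)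
    (hb : ∀ y ∈ V, f y ≤ M) {x : E} (hx : x ∈ convexHull ℝ V) (hfx : f x = M) :
    x ∈ convexHull ℝ {y ∈ V | f y = M} := by
  classical
  obtain ⟨w, hw0, hw1, hwx⟩ := conv_rep hfin hx
  set t := hfin.toFinset
  have hfy : ∀ y ∈ t, w y ≠ 0 → f y = M := by
    have hsum : ∑ y ∈ t, w y * (M - f y) = 0 := by
      have hfsum : f x = ∑ y ∈ t, w y * f y := by
        rw [← hwx, map_sum]; simp [mul_comm]
      have : ∑ y ∈ t, w y * (M - f y) = (∑ y ∈ t, w y) * M - ∑ y ∈ t, w y * f y := by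
        rw [Finset.sum_mul]
        rw [← Finset.sum_sub_distrib]
        exact Finset.sum_congr rfl (fun y _ => by ring)
      rw [this, hw1, ← hfsum, hfx]; ring
    intro y hy hwy
    have h0 := (Finset.sum_eq_zero_iff_of_nonneg (fun y hy => by
      have := hb y (by simpa [t] using hy)
      have := hw0 y hy
      nlinarith)).1 hsum y hy
    have hMy : M - f y = 0 := by
      rcases mul_eq_zero.1 h0 with h | h
      · exact absurd h hwy
      · exact h
    linarith
  have hsub : (↑(t.filter (fun y => f y = M)) : Set E) ⊆ {y ∈ V | f y = M} := by
    intro y hy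
    simp only [Finset.coe_filter, mem_setOf_eq, Finset.mem_coe] at hy
    exact ⟨by simpa [t] using hy.1, hy.2⟩
  refine convexHull_mono hsub ?_
  rw [Finset.mem_convexHull']
  refine ⟨w, fun y hy => hw0 y (Finset.filter_subset _ _ hy), ?_, ?_⟩
  · rw [← hw1]
    exact (Finset.sum_filter_of_ne (fun y hy hwy => hfy y hy hwy)).symm ▸ rfl
  · rw [← hwx]
    refine (Finset.sum_filter_of_ne (fun y hy hwy => hfy y hy ?_)) -- w y • y ≠ 0 → f y = M
    intro h; rw [h, zero_smul] at hwy; exact hwy rfl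

lemma conv_eq_on_face (V : Set E) (f : E →ₗ[ℝ] ℝ) (M : ℝ) :
    ∀ x ∈ convexHull ℝ {y ∈ V | f y = M}, f x = M := fun x hx =>
  le_antisymm (conv_le _ f M (fun y hy => le_of_eq hy.2) x hx)
    (conv_ge _ f M (fun y hy => ge_of_eq hy.2) x hx)

lemma face_isExtreme {V : Set E} (hfin : V.Finite) (f : E →ₗ[ℝ] ℝ) (M : ℝ)
    (hb : ∀ y ∈ V, f y ≤ M) :
    IsExtreme ℝ (convexHull ℝ V) (convexHull ℝ {y ∈ V | f y = M}) := by
  constructor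
  · exact convexHull_mono (sep_subset _ _)
  · rintro x₁ hx₁ x₂ hx₂ x hxS ⟨a, b, ha, hb', hab, rfl⟩
    have hfx : f (a • x₁ + b • x₂) = M := conv_eq_on_face V f M _ hxS
    have h1 : f x₁ ≤ M := conv_le V f M hb x₁ hx₁
    have h2 : f x₂ ≤ M := conv_le V f M hb x₂ hx₂
    have heq : a * f x₁ + b * f x₂ = M := by
      rw [← hfx]; simp
    obtain ⟨e1, e2⟩ := lin_both_eq ha hb' hab h1 h2 heq
    exact mem_face hfin f M hb hx₁ e1


variable {V : Set (Fin n → ℝ)} {v : Fin n → ℝ}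

lemma g_nonneg (g : (Fin n → ℝ) →ₗ[ℝ] ℝ) (hg0 : g v = 0) (hg1 : ∀ y ∈ V, y ≠ v → 1 ≤ g y) :
    ∀ x ∈ convexHull ℝ V, 0 ≤ g x := by
  intro x hx
  refine convexHull_min (fun y hy => ?_) (convex_halfSpace_ge ⟨g.map_add, g.map_smul⟩ 0) hx
  show (0:ℝ) ≤ g y
  rcases eq_or_ne y v with rfl | hne
  · exact le_of_eq hg0.symm
  · linarith [hg1 y hy hne]

lemma gzero_eq (hfin : V.Finite) (g : (Fin n → ℝ) →ₗ[ℝ] ℝ) (hg0 : g v = 0) (hg1 : ∀ y ∈ V, y ≠ v → 1 ≤ g y) {x : E} (hx : x ∈ convexHull ℝ V) (hgx : g x = 0) : x = v := by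
  classical
  obtain ⟨w, hw0, hw1, hwx⟩ := conv_rep hfin hx
  set t := hfin.toFinset with ht
  have hyV : ∀ y ∈ t, y ∈ V := fun y hy => by rwa [ht, Set.Finite.mem_toFinset] at hy
  have hgsum : g x = ∑ y ∈ t, w y * g y := by
    rw [← hwx, map_sum]; simp
  have hterm : ∀ y ∈ t, w y * g y = 0 := by
    refine (Finset.sum_eq_zero_iff_of_nonneg (fun y hy => ?_)).1 (by rw [← hgsum, hgx]) 
    have := g_nonneg g hg0 hg1 y (subset_convexHull ℝ V (hyV y hy))
    exact mul_nonneg (hw0 y hy) this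
  have hyv : ∀ y ∈ t, w y • y = w y • v := by
    intro y hy
    rcases eq_or_ne (w y) 0 with h | h
    · rw [h, zero_smul, zero_smul]
    · have hgy : g y = 0 := by
        rcases mul_eq_zero.1 (hterm y hy) with h' | h'
        · exact absurd h' h
        · exact h'
      have : y = v := by
        by_contra hne
        linarith [hg1 y (hyV y hy) hne]
      rw [this]
  calc x = ∑ y ∈ t, w y • y := hwx.symm
  _ = ∑ y ∈ t, w y • v := Finset.sum_congr rfl hyv
  _ = (∑ y ∈ t, w y) • v := (Finset.sum_smul).symm
  _ = v := by rw [hw1, one_smul]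


lemma proj_mem (hfin : V.Finite) (hv : v ∈ V) (g : (Fin n → ℝ) →ₗ[ℝ] ℝ) (hg0 : g v = 0) (hg1 : ∀ y ∈ V, y ≠ v → 1 ≤ g y) {x : E} (hx : x ∈ convexHull ℝ V) (hgx : 0 < g x) :
    v + (2 * g x)⁻¹ • (x - v) ∈ convexHull ℝ V := by
  classical
  obtain ⟨w, hw0, hw1, hwx⟩ := conv_rep hfin hx
  set t := hfin.toFinset with ht
  have hvt : v ∈ t := by rwa [ht, Set.Finite.mem_toFinset]
  have hyV : ∀ y ∈ t, y ∈ V := fun y hy => by rwa [ht, Set.Finite.mem_toFinset] at hy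
  set s : ℝ := (2 * g x)⁻¹ with hs
  have hspos : 0 < s := by positivity
  have hgsum : g x = ∑ y ∈ t, w y * g y := by rw [← hwx, map_sum]; simp
  -- sum over erase
  have herase : ∑ y ∈ t.erase v, w y = 1 - w v := by
    have := Finset.add_sum_erase t w hvt
    linarith
  have hwle : ∑ y ∈ t.erase v, w y ≤ g x := by
    calc ∑ y ∈ t.erase v, w y ≤ ∑ y ∈ t.erase v, w y * g y := by
          refine Finset.sum_le_sum (fun y hy => ?_)
          have hyv : y ≠ v := Finset.ne_of_mem_erase hy
          have h1 : 1 ≤ g y := hg1 y (hyV y (Finset.mem_of_mem_erase hy)) hyv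
          have h0 : 0 ≤ w y := hw0 y (Finset.mem_of_mem_erase hy)
          nlinarith
    _ = ∑ y ∈ t, w y * g y := by
          rw [← Finset.add_sum_erase t _ hvt, hg0]; ring
    _ = g x := hgsum.symm
  set μ : E → ℝ := fun y => if y = v then 1 - s * ∑ y' ∈ t.erase v, w y' else s * w y with hμ
  have hμ0 : ∀ y ∈ t, 0 ≤ μ y := by
    intro y hy
    rcases eq_or_ne y v with rfl | hne
    · simp only [hμ, if_pos rfl]
      have : s * ∑ y' ∈ t.erase y, w y' ≤ s * g x := by
        exact mul_le_mul_of_nonneg_left hwle hspos.le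
      have hsx : s * g x = 1/2 := by
        rw [hs, inv_mul_eq_div, div_eq_iff (by positivity : (2 : ℝ) * g x ≠ 0)]
        ring
      linarith
    · simp only [hμ, if_neg hne]
      exact mul_nonneg hspos.le (hw0 y hy)
  have hμ1 : ∑ y ∈ t, μ y = 1 := by
    rw [← Finset.add_sum_erase t μ hvt]
    have : ∑ y ∈ t.erase v, μ y = s * ∑ y' ∈ t.erase v, w y' := by
      rw [Finset.mul_sum]
      refine Finset.sum_congr rfl (fun y hy => ?_)
      simp [hμ, Finset.ne_of_mem_erase hy]
    rw [this]
    simp [hμ]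
  have hμx : ∑ y ∈ t, μ y • y = v + s • (x - v) := by
    have hexp : ∑ y ∈ t, μ y • y = μ v • v + ∑ y ∈ t.erase v, (s * w y) • y := by
      rw [← Finset.add_sum_erase t _ hvt]
      congr 1
      refine Finset.sum_congr rfl (fun y hy => ?_)
      simp [hμ, Finset.ne_of_mem_erase hy]
    have hxv : x = w v • v + ∑ y ∈ t.erase v, w y • y := by
      rw [← Finset.add_sum_erase t _ hvt] at hwx
      exact hwx.symm
    have hsx : ∑ y ∈ t.erase v, (s * w y) • y = s • (x - v) - (s * w v) • v + s • v := by
      rw [hxv]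
      rw [smul_sub, smul_add]
      rw [Finset.smul_sum]
      simp only [smul_smul]
      module
    rw [hexp, hsx]
    have hμv : μ v = 1 - s * (1 - w v) := by simp [hμ, herase]
    rw [hμv]
    module
  rw [← hμx]
  exact (convex_convexHull ℝ V).sum_mem hμ0 hμ1 (fun y hy => subset_convexHull ℝ V (hyV y hy))

lemma inv2mul {a : ℝ} (ha : 0 < a) : (2*a)⁻¹ * a = 1/2 := by
  rw [inv_mul_eq_div, div_eq_iff (by positivity : (2:ℝ)*a ≠ 0)]; ring

set_option maxHeartbeats 2000000 in
lemma edge_lemma {V : Set (Fin n → ℝ)} {v : Fin n → ℝ} (hfin : V.Finite) (hv : v ∈ V)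
    (g : (Fin n → ℝ) →ₗ[ℝ] ℝ) (hg0 : g v = 0) (hg1 : ∀ y ∈ V, y ≠ v → 1 ≤ g y)
    (u : (Fin n → ℝ) →ₗ[ℝ] ℝ) (hup : ∃ p ∈ convexHull ℝ V, u v < u p) :
    ∃ z ∈ V, z ≠ v ∧ IsExtreme ℝ (convexHull ℝ V) (segment ℝ v z) ∧ u v < u z := by
  classical
  set P := convexHull ℝ V with hPdef
  have hPconv : Convex ℝ P := convex_convexHull ℝ V
  have hPcomp : IsCompact P := hfin.isCompact_convexHull ℝ
  have hvP : v ∈ P := subset_convexHull ℝ V hv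
  have hgP : ∀ x ∈ P, 0 ≤ g x := g_nonneg g hg0 hg1
  have hzeq : ∀ x ∈ P, g x = 0 → x = v := fun x hx h => gzero_eq hfin g hg0 hg1 hx h
  have hgpos : ∀ x ∈ P, x ≠ v → 0 < g x := fun x hx hne =>
    lt_of_le_of_ne (hgP x hx) (fun h => hne (hzeq x hx h.symm))
  set K := P ∩ {y | g y = 1/2} with hKdef
  have hproj : ∀ x ∈ P, x ≠ v → v + (2 * g x)⁻¹ • (x - v) ∈ K := by
    intro x hx hne
    have hgx := hgpos x hx hne
    refine ⟨proj_mem hfin hv g hg0 hg1 hx hgx, ?_⟩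
    show g (v + (2 * g x)⁻¹ • (x - v)) = 1/2
    rw [map_add, map_smul, map_sub, hg0, smul_eq_mul, sub_zero, zero_add, inv2mul hgx]
  obtain ⟨p, hpP, hupv⟩ := hup
  have hpne : p ≠ v := fun h => by rw [h] at hupv; exact lt_irrefl _ hupv
  have hgp : 0 < g p := hgpos p hpP hpne
  have hπpK : v + (2 * g p)⁻¹ • (p - v) ∈ K := hproj p hpP hpne
  have huπp : u v < u (v + (2 * g p)⁻¹ • (p - v)) := by
    have hval : u (v + (2 * g p)⁻¹ • (p - v)) = u v + (2 * g p)⁻¹ * (u p - u v) := by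
      simp only [map_add, map_smul, map_sub, smul_eq_mul]; try ring
    have hspos : 0 < (2 * g p)⁻¹ := by positivity
    nlinarith
  -- K compact convex nonempty, maximize u
  have hgc : Continuous g := LinearMap.continuous_of_finiteDimensional g
  have huc : Continuous u := LinearMap.continuous_of_finiteDimensional u
  have hKcomp : IsCompact K := hPcomp.inter_right (isClosed_eq hgc continuous_const)
  have hKconv : Convex ℝ K := hPconv.inter (convex_hyperplane ⟨g.map_add, g.map_smul⟩ (1/2))
  obtain ⟨x₀, hx₀K, hx₀max⟩ := hKcomp.exists_isMaxOn ⟨_, hπpK⟩ huc.continuousOn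
  set K' := K ∩ {y | u y = u x₀} with hK'def
  have hK'comp : IsCompact K' := hKcomp.inter_right (isClosed_eq huc continuous_const)
  have hK'conv : Convex ℝ K' := hKconv.inter (convex_hyperplane ⟨u.map_add, u.map_smul⟩ _)
  obtain ⟨x, hxK'ext⟩ := hK'comp.extremePoints_nonempty ⟨x₀, hx₀K, rfl⟩
  obtain ⟨⟨hxK, hux⟩, hxext'⟩ := hxK'ext
  have hux : u x = u x₀ := hux
  have hxext : x ∈ K.extremePoints ℝ := by
    refine ⟨hxK, fun a ha b hb hseg => ?_⟩
    obtain ⟨c₁, c₂, hc₁, hc₂, hc, heq⟩ := hseg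
    have hua : u a ≤ u x₀ := hx₀max ha
    have hub : u b ≤ u x₀ := hx₀max hb
    have hsum : c₁ * u a + c₂ * u b = u x₀ := by
      have h' := congrArg u heq
      rw [map_add, map_smul, map_smul, smul_eq_mul, smul_eq_mul, hux] at h'
      exact h'
    obtain ⟨e1, e2⟩ := lin_both_eq hc₁ hc₂ hc hua hub hsum
    exact hxext' ⟨ha, e1⟩ ⟨hb, e2⟩ ⟨c₁, c₂, hc₁, hc₂, hc, heq⟩
  have hgx : g x = 1/2 := hxK.2
  have hxP : x ∈ P := hxK.1
  have huxv : u v < u x := by rw [hux]; exact lt_of_lt_of_le huπp (hx₀max hπpK)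
  have hxv : x ≠ v := fun h => by rw [h] at huxv; exact lt_irrefl _ huxv
  -- line functionals
  have hgl : ∀ r : ℝ, g (v + r • (x - v)) = r * g x := by
    intro r; simp only [map_add, map_smul, map_sub, hg0, smul_eq_mul]; try ring
  have hul : ∀ r : ℝ, u (v + r • (x - v)) = u v + r * (u x - u v) := by
    intro r; simp only [map_add, map_smul, map_sub, smul_eq_mul]; try ring
  -- the ray
  set T := {t : ℝ | 0 ≤ t ∧ v + t • (x - v) ∈ P} with hTdef
  have h0T : (0:ℝ) ∈ T := ⟨le_refl 0, by simpa using hvP⟩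
  have h1T : (1:ℝ) ∈ T := ⟨zero_le_one, by rw [one_smul]; simpa [add_sub_cancel] using hxP⟩
  have hxvne : x - v ≠ 0 := sub_ne_zero.2 hxv
  have hxvnorm : 0 < ‖x - v‖ := norm_pos_iff.2 hxvne
  have hTbdd : BddAbove T := by
    obtain ⟨R, hR⟩ := hPcomp.isBounded.subset_closedBall (0 : Fin n → ℝ)
    refine ⟨(R + ‖v‖) / ‖x - v‖, fun t ht => ?_⟩
    have hmem := hR ht.2
    rw [Metric.mem_closedBall, dist_zero_right] at hmem
    have hn1 : t * ‖x - v‖ = ‖t • (x - v)‖ := by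
      rw [norm_smul, Real.norm_eq_abs, abs_of_nonneg ht.1]
    have h2 : ‖t • (x - v)‖ ≤ R + ‖v‖ := by
      calc ‖t • (x-v)‖ = ‖(v + t • (x - v)) - v‖ := by congr 1; abel
      _ ≤ ‖v + t • (x-v)‖ + ‖v‖ := norm_sub_le _ _
      _ ≤ R + ‖v‖ := by linarith
    rw [le_div_iff₀ hxvnorm]
    linarith
  have hTcl : IsClosed T := by
    have hTeq : T = Set.Ici (0:ℝ) ∩ (fun t : ℝ => v + t • (x - v)) ⁻¹' P := rfl
    rw [hTeq]
    exact isClosed_Ici.inter (IsClosed.preimage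
      (continuous_const.add (continuous_id.smul continuous_const)) hPcomp.isClosed)
  set tmax := sSup T with htmaxdef
  have htmaxT : tmax ∈ T := hTcl.csSup_mem ⟨0, h0T⟩ hTbdd
  have htmax1 : 1 ≤ tmax := le_csSup hTbdd h1T
  have htmaxpos : 0 < tmax := lt_of_lt_of_le one_pos htmax1
  have htne : tmax ≠ 0 := htmaxpos.ne'
  set z := v + tmax • (x - v) with hzdef
  have hzP : z ∈ P := htmaxT.2
  have hparam : ∀ r : ℝ, 0 ≤ r → r ≤ tmax → v + r • (x - v) ∈ segment ℝ v z := by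
    intro r h0 h1
    have hd1 : r / tmax ≤ 1 := (div_le_one htmaxpos).2 h1
    refine ⟨1 - r / tmax, r / tmax, by linarith, by positivity, by ring, ?_⟩
    rw [hzdef]
    have htne2 : tmax ≠ 0 := htne
    match_scalars <;> field_simp <;> ring
  have hSparam : ∀ q ∈ segment ℝ v z, ∃ r, 0 ≤ r ∧ r ≤ tmax ∧ q = v + r • (x - v) := by
    rintro q ⟨a, b, ha, hb, hab, rfl⟩
    refine ⟨b * tmax, mul_nonneg hb htmaxpos.le, by nlinarith, ?_⟩
    have haa : a = 1 - b := by linarith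
    rw [haa, hzdef]
    module
  have hray : ∀ y ∈ P, ∀ ρ : ℝ, 0 ≤ ρ → y = v + ρ • (x - v) → y ∈ segment ℝ v z := by
    intro y hy ρ hρ hyeq
    have hρT : ρ ∈ T := ⟨hρ, hyeq ▸ hy⟩
    rw [hyeq]
    exact hparam ρ hρ (le_csSup hTbdd hρT)
  -- extremeness of the segment
  have hSext : IsExtreme ℝ P (segment ℝ v z) := by
    constructor
    · exact hPconv.segment_subset hvP hzP
    · rintro x₁ hx₁ x₂ hx₂ q hqS ⟨c₁, c₂, hc₁, hc₂, hc, hqeq⟩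
      obtain ⟨r, hr0, hrmax, hqr⟩ := hSparam q hqS
      have hg₁ : 0 ≤ g x₁ := hgP x₁ hx₁
      have hg₂ : 0 ≤ g x₂ := hgP x₂ hx₂
      have hgq : c₁ * g x₁ + c₂ * g x₂ = r * g x := by
        have h' := congrArg g hqeq
        rw [map_add, map_smul, map_smul, smul_eq_mul, smul_eq_mul, hqr, hgl] at h'
        exact h'
      rcases eq_or_lt_of_le hr0 with hr0' | hrpos
      · have h00 : c₁ * g x₁ + c₂ * g x₂ = 0 := by rw [hgq, ← hr0']; ring
        have h₁0 : g x₁ = 0 := by nlinarith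
        have h₂0 : g x₂ = 0 := by nlinarith
        rw [hzeq x₁ hx₁ h₁0]
        exact left_mem_segment ℝ v z
      · rcases eq_or_lt_of_le hg₁ with hg₁0 | hg₁pos
        · -- x₁ = v
          have e₁ : x₁ = v := hzeq x₁ hx₁ hg₁0.symm
          have hc₁eq : c₁ = 1 - c₂ := by linarith
          rw [e₁, hc₁eq, hqr] at hqeq
          have e₂ : x₂ = v + (r / c₂) • (x - v) := by
            have hc₂ne : c₂ ≠ 0 := hc₂.ne'
            apply smul_right_injective (Fin n → ℝ) hc₂ne
            show c₂ • x₂ = c₂ • (v + (r / c₂) • (x - v))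
            have h1 : c₂ • x₂ = v + r • (x - v) - (1 - c₂) • v := by rw [← hqeq]; module
            rw [h1]
            match_scalars <;> field_simp [hc₂ne] <;> ring
          exact e₁ ▸ left_mem_segment ℝ v z
        · rcases eq_or_lt_of_le hg₂ with hg₂0 | hg₂pos
          · have e₂ : x₂ = v := hzeq x₂ hx₂ hg₂0.symm
            have hc₂eq : c₂ = 1 - c₁ := by linarith
            rw [e₂, hc₂eq, hqr] at hqeq
            have e₁ : x₁ = v + (r / c₁) • (x - v) := by
              have hc₁ne : c₁ ≠ 0 := hc₁.ne'
              apply smul_right_injective (Fin n → ℝ) hc₁ne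
              show c₁ • x₁ = c₁ • (v + (r / c₁) • (x - v))
              have h1 : c₁ • x₁ = v + r • (x - v) - (1 - c₁) • v := by rw [← hqeq]; module
              rw [h1]
              match_scalars <;> field_simp [hc₁ne] <;> ring
            exact hray x₁ hx₁ (r / c₁) (by positivity) e₁
          · -- both positive: use the projections
            have hx₁v : x₁ ≠ v := fun h => by rw [h, hg0] at hg₁pos; exact lt_irrefl _ hg₁pos
            have hx₂v : x₂ ≠ v := fun h => by rw [h, hg0] at hg₂pos; exact lt_irrefl _ hg₂pos
            have hπ₁ : v + (2 * g x₁)⁻¹ • (x₁ - v) ∈ K := hproj x₁ hx₁ hx₁v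
            have hπ₂ : v + (2 * g x₂)⁻¹ • (x₂ - v) ∈ K := hproj x₂ hx₂ hx₂v
            have hrne : r ≠ 0 := hrpos.ne'
            have hg₁ne : g x₁ ≠ 0 := hg₁pos.ne'
            have hg₂ne : g x₂ ≠ 0 := hg₂pos.ne'
            -- x formula
            have h2' : r • (x - v) = c₁ • (x₁ - v) + c₂ • (x₂ - v) := by
              have hc₁eq : c₁ = 1 - c₂ := by linarith
              rw [hqr] at hqeq
              calc r • (x - v) = (c₁ • x₁ + c₂ • x₂) - v := by rw [hqeq]; abel
              _ = c₁ • (x₁ - v) + c₂ • (x₂ - v) := by rw [hc₁eq]; module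
            have hxformula : x = v + r⁻¹ • (c₁ • (x₁ - v) + c₂ • (x₂ - v)) := by
              rw [← h2', smul_smul, inv_mul_cancel₀ hrne, one_smul]
              abel
            set a' := 2 * (c₁ * g x₁) / r with ha'def
            set b' := 2 * (c₂ * g x₂) / r with hb'def
            have ha'pos : 0 < a' := by rw [ha'def]; positivity
            have hb'pos : 0 < b' := by rw [hb'def]; positivity
            have hab' : a' + b' = 1 := by
              rw [ha'def, hb'def, ← add_div, div_eq_one_iff_eq hrne]
              have : g x = 1/2 := hgx
              linear_combination 2 * hgq + 2 * r * this
            have hsegx : x ∈ openSegment ℝ (v + (2 * g x₁)⁻¹ • (x₁ - v))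
                (v + (2 * g x₂)⁻¹ • (x₂ - v)) := by
              refine ⟨a', b', ha'pos, hb'pos, hab', ?_⟩
              have hexp : a' • (v + (2 * g x₁)⁻¹ • (x₁ - v)) + b' • (v + (2 * g x₂)⁻¹ • (x₂ - v))
                  = (a' + b') • v + (a' * (2 * g x₁)⁻¹) • (x₁ - v)
                    + (b' * (2 * g x₂)⁻¹) • (x₂ - v) := by module
              have hc1 : a' * (2 * g x₁)⁻¹ = c₁ / r := by
                rw [ha'def]; field_simp
              have hc2 : b' * (2 * g x₂)⁻¹ = c₂ / r := by
                rw [hb'def]; field_simp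
              rw [hexp, hab', one_smul, hc1, hc2, hxformula]
              module
            have q₁ := hxext.2 hπ₁ hπ₂ hsegx
            have q₂ := hxext.2 hπ₂ hπ₁ (by rw [openSegment_symm]; exact hsegx)
            -- recover x₁, x₂
            have e₁ : x₁ = v + (2 * g x₁) • (x - v) := by
              have q₁' : (2 * g x₁)⁻¹ • (x₁ - v) = x - v := by rw [← q₁]; abel
              have hmul : (2 * g x₁) * (2 * g x₁)⁻¹ = 1 := mul_inv_cancel₀ (by positivity)
              calc x₁ = v + ((2 * g x₁) * (2 * g x₁)⁻¹) • (x₁ - v) := by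
                    rw [hmul, one_smul]; abel
              _ = v + (2 * g x₁) • ((2 * g x₁)⁻¹ • (x₁ - v)) := by rw [mul_smul]
              _ = v + (2 * g x₁) • (x - v) := by rw [q₁']
            have e₂ : x₂ = v + (2 * g x₂) • (x - v) := by
              have q₂' : (2 * g x₂)⁻¹ • (x₂ - v) = x - v := by rw [← q₂]; abel
              have hmul : (2 * g x₂) * (2 * g x₂)⁻¹ = 1 := mul_inv_cancel₀ (by positivity)
              calc x₂ = v + ((2 * g x₂) * (2 * g x₂)⁻¹) • (x₂ - v) := by
                    rw [hmul, one_smul]; abel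
              _ = v + (2 * g x₂) • ((2 * g x₂)⁻¹ • (x₂ - v)) := by rw [mul_smul]
              _ = v + (2 * g x₂) • (x - v) := by rw [q₂']
            exact hray x₁ hx₁ (2 * g x₁) (by positivity) e₁
  -- z is an extreme point hence a vertex
  have hgz : g z = tmax * g x := hgl tmax
  have hzv : z ≠ v := by
    intro h
    rw [h, hg0] at hgz
    rw [hgx] at hgz
    nlinarith
  have hzext : z ∈ P.extremePoints ℝ := by
    refine ⟨hzP, fun a ha b hb hseg => ?_⟩
    have haS := hSext.2 ha hb (right_mem_segment ℝ v z) hseg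
    have hbS := hSext.2 hb ha (right_mem_segment ℝ v z) (by rw [openSegment_symm]; exact hseg)
    obtain ⟨ra, hra0, hramax, haeq⟩ := hSparam a haS
    obtain ⟨rb, hrb0, hrbmax, hbeq⟩ := hSparam b hbS
    obtain ⟨c₁, c₂, hc₁, hc₂, hc, heq⟩ := hseg
    have hge : c₁ * (ra * g x) + c₂ * (rb * g x) = tmax * g x := by
      have h' := congrArg g heq
      rw [map_add, map_smul, map_smul, smul_eq_mul, smul_eq_mul, haeq, hbeq, hgl, hgl] at h'
      rw [← hgz]
      exact h'
    have key : c₁ * ra + c₂ * rb = tmax := by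
      rw [hgx] at hge
      linarith [hge]
    have hra : ra = tmax := le_antisymm hramax (by nlinarith [mul_nonneg hc₂.le (sub_nonneg.2 hrbmax)])
    have hrb : rb = tmax := le_antisymm hrbmax (by nlinarith [mul_nonneg hc₁.le (sub_nonneg.2 hramax)])
    rw [haeq, hra, ← hzdef]
  have hzV : z ∈ V := extremePoints_convexHull_subset hzext
  have huz : u v < u z := by
    have h' : u z = u v + tmax * (u x - u v) := hul tmax
    nlinarith
  exact ⟨z, hzV, hzv, hSext, huz⟩
-- ===== indicator/sum helpers =====
lemma sum_ind_mem {τ σ : Finset (Fin n)} :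
    (∑ b ∈ τ, if b ∈ σ then (1:ℝ) else 0) = ((τ ∩ σ).card : ℝ) := by
  classical
  rw [Finset.sum_ite_mem]
  simp

lemma sum_ind_notmem {τ σ : Finset (Fin n)} :
    (∑ b ∈ τ, if b ∈ σ then (0:ℝ) else 1) = ((τ \ σ).card : ℝ) := by
  classical
  have : ∀ b, (if b ∈ σ then (0:ℝ) else 1) = 1 - (if b ∈ σ then 1 else 0) := by
    intro b; by_cases h : b ∈ σ <;> simp [h]
  rw [Finset.sum_congr rfl (fun b _ => this b), Finset.sum_sub_distrib, sum_ind_mem]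
  rw [Finset.sum_const, Finset.card_sdiff_add_card_inter τ σ |>.symm]
  push_cast
  ring

lemma sum_ind_single {τ : Finset (Fin n)} {a : Fin n} {c : ℝ} :
    (∑ b ∈ τ, if b = a then c else 0) = if a ∈ τ then c else 0 := by
  classical
  rw [Finset.sum_ite_eq' τ a (fun _ => c)]

lemma inter_card_left {τ X : Finset (Fin n)} : (τ ∩ X).card = X.card ↔ X ⊆ τ := by
  classical
  constructor
  · intro h
    have heq : τ ∩ X = X := Finset.eq_of_subset_of_card_le Finset.inter_subset_right (le_of_eq h.symm)
    rw [← heq]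
    exact Finset.inter_subset_left
  · intro h
    rw [Finset.inter_eq_right.2 h]

lemma inter_card_right {τ X : Finset (Fin n)} : (τ ∩ X).card = τ.card ↔ τ ⊆ X := by
  classical
  constructor
  · intro h
    have heq : τ ∩ X = τ := Finset.eq_of_subset_of_card_le Finset.inter_subset_left (le_of_eq h.symm)
    rw [← heq]
    exact Finset.inter_subset_right
  · intro h
    rw [Finset.inter_eq_left.2 h]

lemma comb_bound {τ σ σ' : Finset (Fin n)} {k : ℕ} (hτ : τ.card = k) :
    (τ ∩ σ).card + (τ ∩ σ').card ≤ k + (σ ∩ σ').card ∧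
      ((τ ∩ σ).card + (τ ∩ σ').card = k + (σ ∩ σ').card ↔ (σ ∩ σ' ⊆ τ ∧ τ ⊆ σ ∪ σ')) := by
  classical
  have h1 : (τ ∩ σ) ∪ (τ ∩ σ') = τ ∩ (σ ∪ σ') := (Finset.inter_union_distrib_left τ σ σ').symm
  have h2 : (τ ∩ σ) ∩ (τ ∩ σ') = τ ∩ (σ ∩ σ') := by
    ext b; simp only [Finset.mem_inter]; tauto
  have hkey : (τ ∩ σ).card + (τ ∩ σ').card = (τ ∩ (σ ∩ σ')).card + (τ ∩ (σ ∪ σ')).card := by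
    rw [← h1, ← h2]
    exact (Finset.card_inter_add_card_union _ _).symm
  have hb1 : (τ ∩ (σ ∩ σ')).card ≤ (σ ∩ σ').card :=
    Finset.card_le_card Finset.inter_subset_right
  have hb2 : (τ ∩ (σ ∪ σ')).card ≤ k := hτ ▸ Finset.card_le_card Finset.inter_subset_left
  constructor
  · omega
  · constructor
    · intro h
      have e1 : (τ ∩ (σ ∩ σ')).card = (σ ∩ σ').card := by omega
      have e2 : (τ ∩ (σ ∪ σ')).card = τ.card := by omega
      exact ⟨inter_card_left.1 e1, inter_card_right.1 e2⟩
    · rintro ⟨hs1, hs2⟩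
      have e1 : (τ ∩ (σ ∩ σ')).card = (σ ∩ σ').card := inter_card_left.2 hs1
      have e2 : (τ ∩ (σ ∪ σ')).card = τ.card := inter_card_right.2 hs2
      omega


theorem symexch {α : Type*} (M : Matroid α) {B₁ B₂ : Set α} (h₁ : M.IsBase B₁) (h₂ : M.IsBase B₂)
    {i : α} (hi : i ∈ B₁ \ B₂) :
    ∃ j ∈ B₂ \ B₁, M.IsBase (insert j (B₁ \ {i})) ∧ M.IsBase (insert i (B₂ \ {j})) := by
  classical
  obtain ⟨hiB₁, hiB₂⟩ := hi
  have hiE : i ∈ M.E := h₁.subset_ground hiB₁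
  set C : Set α := {j ∈ B₂ | i ∉ M.closure (B₂ \ {j})} with hC
  -- i ∈ closure C
  have hicC : i ∈ M.closure C := by
    have hJs : ({B₂} ∪ (fun j => B₂ \ {j}) '' (B₂ \ C) : Set (Set α)).Nonempty := by
      exact ⟨B₂, Or.inl rfl⟩
    have hsub : ∀ J ∈ ({B₂} ∪ (fun j => B₂ \ {j}) '' (B₂ \ C) : Set (Set α)), J ⊆ B₂ := by
      rintro J (rfl | ⟨j, _, rfl⟩)
      · exact subset_rfl
      · exact diff_subset
    have hint : ⋂₀ ({B₂} ∪ (fun j => B₂ \ {j}) '' (B₂ \ C) : Set (Set α)) = C := by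
      ext x
      simp only [sInter_union, sInter_image, sInter_singleton, mem_inter_iff, mem_iInter,
        mem_diff, mem_singleton_iff]
      constructor
      · rintro ⟨hxB₂, hx⟩
        by_contra hxC
        exact (hx x ⟨hxB₂, hxC⟩).2 rfl
      · rintro hxC
        refine ⟨hxC.1, fun j hj => ⟨hxC.1, fun hxj => ?_⟩⟩
        exact hj.2 (hxj ▸ hxC)
    have := h₂.indep.closure_sInter_eq_biInter_closure_of_forall_subset hJs hsub
    rw [hint] at this
    rw [this, mem_iInter₂]
    rintro J (rfl | ⟨j, hj, rfl⟩)
    · rw [h₂.closure_eq]; exact hiE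
    · by_contra h
      exact (hj.2 ⟨hj.1, h⟩)
  -- find j ∈ C, j ∉ closure (B₁ \ {i})
  have hinotH : i ∉ M.closure (B₁ \ {i}) := h₁.indep.notMem_closure_diff_of_mem hiB₁
  have hCnotsub : ¬ C ⊆ M.closure (B₁ \ {i}) := by
    intro hsub
    exact hinotH (M.closure_subset_closure_of_subset_closure hsub hicC)
  obtain ⟨j, hjC, hjH⟩ := not_subset.1 hCnotsub
  have hjB₂ : j ∈ B₂ := hjC.1
  have hij : j ≠ i := fun h => hiB₂ (h ▸ hjB₂)
  have hjB₁ : j ∉ B₁ := by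
    intro hjB₁
    exact hjH (M.subset_closure (B₁ \ {i}) (diff_subset.trans h₁.subset_ground) ⟨hjB₁, hij⟩)
  have hjE : j ∈ M.E := h₂.subset_ground hjB₂
  refine ⟨j, ⟨hjB₂, hjB₁⟩, ?_, ?_⟩
  · -- Base (insert j (B₁ \ {i}))
    have hind : M.Indep (B₁ \ {i}) := h₁.indep.subset diff_subset
    have hins : M.Indep (insert j (B₁ \ {i})) := ((hind.notMem_closure_iff hjE).1 hjH).1
    apply hins.isBase_of_ground_subset_closure
    have hex : i ∈ M.closure (insert j (B₁ \ {i})) := by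
      have : j ∈ M.closure (insert i (B₁ \ {i})) \ M.closure (B₁ \ {i}) := by
        rw [insert_diff_singleton, insert_eq_of_mem hiB₁, h₁.closure_eq]
        exact ⟨hjE, hjH⟩
      exact (Matroid.closure_exchange this).1
    have : M.closure (insert i (insert j (B₁ \ {i}))) = M.closure (insert j (B₁ \ {i})) :=
      Matroid.closure_insert_eq_of_mem_closure hex
    rw [← this]
    have hsub : B₁ ⊆ insert i (insert j (B₁ \ {i})) := by
      intro x hx
      rcases eq_or_ne x i with rfl | hxi
      · exact mem_insert _ _
      · exact Or.inr (Or.inr ⟨hx, hxi⟩)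
    calc M.E = M.closure B₁ := h₁.closure_eq.symm
    _ ⊆ _ := M.closure_subset_closure hsub
  · -- Base (insert i (B₂ \ {j}))
    have hind : M.Indep (B₂ \ {j}) := h₂.indep.subset diff_subset
    have hins : M.Indep (insert i (B₂ \ {j})) := ((hind.notMem_closure_iff hiE).1 hjC.2).1
    apply hins.isBase_of_ground_subset_closure
    have hex : j ∈ M.closure (insert i (B₂ \ {j})) := by
      have : i ∈ M.closure (insert j (B₂ \ {j})) \ M.closure (B₂ \ {j}) := by
        rw [insert_diff_singleton, insert_eq_of_mem hjB₂, h₂.closure_eq]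
        exact ⟨hiE, hjC.2⟩
      exact (Matroid.closure_exchange this).1
    have : M.closure (insert j (insert i (B₂ \ {j}))) = M.closure (insert i (B₂ \ {j})) :=
      Matroid.closure_insert_eq_of_mem_closure hex
    rw [← this]
    have hsub : B₂ ⊆ insert j (insert i (B₂ \ {j})) := by
      intro x hx
      rcases eq_or_ne x j with rfl | hxj
      · exact mem_insert _ _
      · exact Or.inr (Or.inr ⟨hx, hxj⟩)
    calc M.E = M.closure B₂ := h₂.closure_eq.symm
    _ ⊆ _ := M.closure_subset_closure hsub

/-- (Gelfand–Goresky–MacPherson–Serganova)  A nonempty collection `B` of `k`-subsets of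
`[n]` is the set of bases of a (rank-`k`) matroid if and only if every edge of the
subpolytope `P_B = conv{e_σ : σ ∈ B}` of `Δ(k,n)` is parallel to a vector `e_i − e_j`. -/
theorem matroid_iff_edges_parallel (k n : ℕ) (hk : 0 < k) (hkn : k < n)
    (B : Set (Finset (Fin n))) (hne : B.Nonempty) (hcard : ∀ σ ∈ B, σ.card = k) :
    (∃ M : Matroid (Fin n), M.E = Set.univ ∧
        ∀ s : Set (Fin n), M.IsBase s ↔ ∃ σ ∈ B, s = ↑σ) ↔
    (∀ σ ∈ B, ∀ σ' ∈ B, indicatorVec σ ≠ indicatorVec σ' →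
      IsExtreme ℝ (convexHull ℝ {x | ∃ σ'' ∈ B, x = indicatorVec σ''})
        (segment ℝ (indicatorVec σ) (indicatorVec σ')) →
      ∃ i j : Fin n, i ≠ j ∧ ∃ c : ℝ,
        indicatorVec σ' - indicatorVec σ = c • (Pi.single i (1 : ℝ) - Pi.single j 1)) := by
  constructor
  · rintro ⟨M, hME, hMB⟩ σ hσ σ' hσ' hvne hext
    have hσσ' : σ ≠ σ' := fun h => hvne (by rw [h])
    have hBσ : M.IsBase ↑σ := (hMB _).2 ⟨σ, hσ, rfl⟩
    have hBσ' : M.IsBase ↑σ' := (hMB _).2 ⟨σ', hσ', rfl⟩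
    have hss : ¬ σ ⊆ σ' := fun hsub => hσσ'
      (Finset.eq_of_subset_of_card_le hsub (by rw [hcard σ hσ, hcard σ' hσ']))
    obtain ⟨i, hiσ, hiσ'⟩ := Finset.not_subset.1 hss
    obtain ⟨j, hjmem, hB₁, hB₂⟩ := symexch M hBσ hBσ' (i := i) ⟨hiσ, hiσ'⟩
    have hjσ' : j ∈ σ' := hjmem.1
    have hjσ : j ∉ σ := fun h => hjmem.2 h
    have hij : i ≠ j := fun h => hiσ' (h ▸ hjσ')
    obtain ⟨ρ₁, hρ₁B, hρ₁eq⟩ := (hMB _).1 hB₁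
    obtain ⟨ρ₂, hρ₂B, hρ₂eq⟩ := (hMB _).1 hB₂
    have hmem₁ : ∀ b : Fin n, b ∈ ρ₁ ↔ (b = j ∨ (b ∈ σ ∧ b ≠ i)) := by
      intro b
      have h' := Set.ext_iff.1 hρ₁eq b
      simp only [Set.mem_insert_iff, Set.mem_diff, Finset.mem_coe, Set.mem_singleton_iff] at h'
      exact h'.symm
    have hmem₂ : ∀ b : Fin n, b ∈ ρ₂ ↔ (b = i ∨ (b ∈ σ' ∧ b ≠ j)) := by
      intro b
      have h' := Set.ext_iff.1 hρ₂eq b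
      simp only [Set.mem_insert_iff, Set.mem_diff, Finset.mem_coe, Set.mem_singleton_iff] at h'
      exact h'.symm
    have hiρ₁ : i ∉ ρ₁ := by simp [hmem₁, hij]
    have hiρ₂ : i ∈ ρ₂ := (hmem₂ i).2 (Or.inl rfl)
    have hjρ₁ : j ∈ ρ₁ := (hmem₁ j).2 (Or.inl rfl)
    have hjρ₂ : j ∉ ρ₂ := by simp [hmem₂, Ne.symm hij]
    have hsum : ∀ b, indicatorVec ρ₁ b + indicatorVec ρ₂ b
        = indicatorVec σ b + indicatorVec σ' b := by
      intro b
      simp only [indicatorVec_apply]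
      by_cases hbi : b = i
      · subst hbi
        rw [if_neg hiρ₁, if_pos hiρ₂, if_pos hiσ, if_neg hiσ']
        norm_num
      · by_cases hbj : b = j
        · subst hbj
          rw [if_pos hjρ₁, if_neg hjρ₂, if_neg hjσ, if_pos hjσ']
          norm_num
        · have h1 : b ∈ ρ₁ ↔ b ∈ σ := by rw [hmem₁]; simp [hbj, hbi]
          have h2 : b ∈ ρ₂ ↔ b ∈ σ' := by rw [hmem₂]; simp [hbi, hbj]
          rw [if_congr h1 rfl rfl, if_congr h2 rfl rfl]
    have hρ₁P : indicatorVec ρ₁ ∈ convexHull ℝ {x | ∃ σ'' ∈ B, x = indicatorVec σ''} :=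
      subset_convexHull _ _ ⟨ρ₁, hρ₁B, rfl⟩
    have hρ₂P : indicatorVec ρ₂ ∈ convexHull ℝ {x | ∃ σ'' ∈ B, x = indicatorVec σ''} :=
      subset_convexHull _ _ ⟨ρ₂, hρ₂B, rfl⟩
    have hmidS : (1/2 : ℝ) • indicatorVec σ + (1/2 : ℝ) • indicatorVec σ' ∈
        segment ℝ (indicatorVec σ) (indicatorVec σ') :=
      ⟨1/2, 1/2, by norm_num, by norm_num, by norm_num, rfl⟩
    have hmidO : (1/2 : ℝ) • indicatorVec σ + (1/2 : ℝ) • indicatorVec σ' ∈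
        openSegment ℝ (indicatorVec ρ₁) (indicatorVec ρ₂) := by
      refine ⟨1/2, 1/2, by norm_num, by norm_num, by norm_num, ?_⟩
      funext b
      simp only [Pi.add_apply, Pi.smul_apply, smul_eq_mul]
      have := hsum b
      linarith
    have h1S := hext.2 hρ₁P hρ₂P hmidS hmidO
    have huniq : ∀ i' ∈ σ, i' ∉ σ' → i' = i := by
      intro i' hi'σ hi'σ'
      by_contra hne'
      obtain ⟨a, b, ha, hb, hab, heq⟩ := h1S
      have hval : ∀ m : Fin n, a * indicatorVec σ m + b * indicatorVec σ' m
          = indicatorVec ρ₁ m := by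
        intro m
        have h' := congrFun heq m
        simpa [Pi.add_apply, Pi.smul_apply, smul_eq_mul] using h'
      have hi'ρ₁ : i' ∈ ρ₁ := (hmem₁ i').2 (Or.inr ⟨hi'σ, hne'⟩)
      have e1 := hval i
      have e2 := hval i'
      simp only [indicatorVec_apply, if_pos hiσ, if_neg hiσ', if_neg hiρ₁] at e1
      simp only [indicatorVec_apply, if_pos hi'σ, if_neg hi'σ', if_pos hi'ρ₁] at e2
      -- e1 : a * 1 + b * 0 = 0 ; e2 : a * 1 + b * 0 = 1
      rw [e1] at e2
      exact one_ne_zero e2.symm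
    have hsd : σ \ σ' = {i} := by
      ext b
      simp only [Finset.mem_sdiff, Finset.mem_singleton]
      constructor
      · rintro ⟨h1, h2⟩; exact huniq b h1 h2
      · rintro rfl; exact ⟨hiσ, hiσ'⟩
    have hcards : (σ' \ σ).card = 1 := by
      rw [Finset.card_sdiff_comm (by rw [hcard σ' hσ', hcard σ hσ]), hsd,
        Finset.card_singleton]
    obtain ⟨j', hj'⟩ := Finset.card_eq_one.1 hcards
    have hj'mem : j' ∈ σ' \ σ := hj' ▸ Finset.mem_singleton_self j'
    have hj'σ' : j' ∈ σ' := (Finset.mem_sdiff.1 hj'mem).1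
    have hj'σ : j' ∉ σ := (Finset.mem_sdiff.1 hj'mem).2
    have hij' : j' ≠ i := fun h => hj'σ (h ▸ hiσ)
    refine ⟨j', i, hij', 1, ?_⟩
    funext b
    simp only [Pi.sub_apply, Pi.smul_apply, smul_eq_mul, Pi.single_apply, indicatorVec_apply]
    by_cases hbi : b = i
    · subst hbi
      rw [if_neg hiσ', if_pos hiσ, if_neg (Ne.symm hij'), if_pos rfl]
      norm_num
    · by_cases hbj : b = j'
      · subst hbj
        rw [if_pos hj'σ', if_neg hj'σ, if_pos rfl, if_neg hbi]
        norm_num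
      · have hbequiv : b ∈ σ ↔ b ∈ σ' := by
          constructor
          · intro h; by_contra h'; exact hbi (huniq b h h')
          · intro h; by_contra h'
            have hmem' : b ∈ σ' \ σ := Finset.mem_sdiff.2 ⟨h, h'⟩
            rw [hj'] at hmem'
            exact hbj (Finset.mem_singleton.1 hmem')
        rw [if_neg hbj, if_neg hbi, if_congr hbequiv.symm rfl rfl]
        norm_num
  · intro hEdge
    classical
    have hexch : Matroid.ExchangeProperty (fun s : Set (Fin n) => ∃ σ ∈ B, s = ↑σ) := by
      rintro X Y ⟨σ, hσ, rfl⟩ ⟨σ', hσ', rfl⟩ a haXY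
      have haσ : a ∈ σ := haXY.1
      have haσ' : a ∉ σ' := fun h => haXY.2 h
      set V : Set (Fin n → ℝ) := {x | ∃ σ'' ∈ B, x = indicatorVec σ''} with hVdef
      have hVfin : V.Finite := by
        have himg : V = indicatorVec '' B := by
          ext x; simp only [hVdef, Set.mem_setOf_eq, Set.mem_image]
          constructor
          · rintro ⟨τ, hτ, rfl⟩; exact ⟨τ, hτ, rfl⟩
          · rintro ⟨τ, hτ, rfl⟩; exact ⟨τ, hτ, rfl⟩
        rw [himg]
        exact (B.toFinite).image _
      set B' : Set (Finset (Fin n)) := {τ ∈ B | σ ∩ σ' ⊆ τ ∧ τ ⊆ σ ∪ σ'} with hB'def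
      set V' : Set (Fin n → ℝ) := {x | ∃ τ ∈ B', x = indicatorVec τ} with hV'def
      set w : Fin n → ℝ := fun b => (if b ∈ σ then (1:ℝ) else 0) + (if b ∈ σ' then 1 else 0)
        with hwdef
      set f := lf w with hfdef
      set M : ℝ := (k : ℝ) + ((σ ∩ σ').card : ℝ) with hMdef
      have hfval : ∀ τ : Finset (Fin n), f (indicatorVec τ)
          = ((τ ∩ σ).card : ℝ) + ((τ ∩ σ').card : ℝ) := by
        intro τ
        rw [hfdef, lf_indicator, hwdef]
        rw [Finset.sum_add_distrib, sum_ind_mem, sum_ind_mem]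
      have hfb : ∀ y ∈ V, f y ≤ M := by
        rintro y ⟨τ, hτ, rfl⟩
        rw [hfval, hMdef]
        have hb := (comb_bound (σ := σ) (σ' := σ') (hcard τ hτ)).1
        exact_mod_cast hb
      have hVmax : {y ∈ V | f y = M} = V' := by
        ext x
        simp only [Set.mem_setOf_eq, hV'def, hB'def]
        constructor
        · rintro ⟨⟨τ, hτ, rfl⟩, hfx⟩
          rw [hfval, hMdef] at hfx
          have hnat : (τ ∩ σ).card + (τ ∩ σ').card = k + (σ ∩ σ').card := by exact_mod_cast hfx
          obtain ⟨hs1, hs2⟩ := (comb_bound (σ := σ) (σ' := σ') (hcard τ hτ)).2.1 hnat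
          exact ⟨τ, ⟨hτ, hs1, hs2⟩, rfl⟩
        · rintro ⟨τ, ⟨hτ, hs1, hs2⟩, rfl⟩
          refine ⟨⟨τ, hτ, rfl⟩, ?_⟩
          rw [hfval, hMdef]
          have hnat : (τ ∩ σ).card + (τ ∩ σ').card = k + (σ ∩ σ').card :=
            (comb_bound (σ := σ) (σ' := σ') (hcard τ hτ)).2.2 ⟨hs1, hs2⟩
          exact_mod_cast hnat
      have hFext : IsExtreme ℝ (convexHull ℝ V) (convexHull ℝ V') := by
        rw [← hVmax]
        exact face_isExtreme hVfin f M hfb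
      have hV'sub : V' ⊆ V := by
        rintro x ⟨τ, hτ, rfl⟩
        exact ⟨τ, hτ.1, rfl⟩
      have hV'fin : V'.Finite := hVfin.subset hV'sub
      have hσB' : σ ∈ B' := ⟨hσ, Finset.inter_subset_left, Finset.subset_union_left⟩
      have hσ'B' : σ' ∈ B' := ⟨hσ', Finset.inter_subset_right, Finset.subset_union_right⟩
      have hvV' : indicatorVec σ ∈ V' := ⟨σ, hσB', rfl⟩
      set g := lf (fun b => if b ∈ σ then (0:ℝ) else 1) with hgdef
      have hgval : ∀ τ : Finset (Fin n), g (indicatorVec τ) = ((τ \ σ).card : ℝ) := by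
        intro τ
        rw [hgdef, lf_indicator, sum_ind_notmem]
      have hg0 : g (indicatorVec σ) = 0 := by rw [hgval]; simp
      have hg1 : ∀ y ∈ V', y ≠ indicatorVec σ → 1 ≤ g y := by
        rintro y ⟨τ, hτ, rfl⟩ hne'
        rw [hgval]
        have hτσ : τ ≠ σ := fun h => hne' (by rw [h])
        have hdne : (τ \ σ).Nonempty := by
          rw [Finset.sdiff_nonempty]
          intro hsub
          exact hτσ (Finset.eq_of_subset_of_card_le hsub
            (by rw [hcard τ hτ.1, hcard σ hσ]))
        have hone : 1 ≤ (τ \ σ).card := Finset.card_pos.2 hdne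
        exact_mod_cast hone
      set u := lf (fun b => if b = a then (-1:ℝ) else 0) with hudef
      have huval : ∀ τ : Finset (Fin n), u (indicatorVec τ)
          = if a ∈ τ then (-1:ℝ) else 0 := by
        intro τ
        rw [hudef, lf_indicator, sum_ind_single]
      have hup : ∃ p ∈ convexHull ℝ V', u (indicatorVec σ) < u p := by
        refine ⟨indicatorVec σ', subset_convexHull ℝ V' ⟨σ', hσ'B', rfl⟩, ?_⟩
        rw [huval, huval, if_pos haσ, if_neg haσ']
        norm_num
      obtain ⟨z, hzV', hzne, hzext, huz⟩ := edge_lemma hV'fin hvV' g hg0 hg1 u hup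
      obtain ⟨τ, hτB', hzeq⟩ := hzV'
      subst hzeq
      have hτB : τ ∈ B := hτB'.1
      have hτsub : τ ⊆ σ ∪ σ' := hτB'.2.2
      have hSext : IsExtreme ℝ (convexHull ℝ V)
          (segment ℝ (indicatorVec σ) (indicatorVec τ)) := hFext.trans hzext
      obtain ⟨i₀, j₀, hij₀, c, hcvec⟩ :=
        hEdge σ hσ τ hτB (fun h => hzne (h.symm)) hSext
      have haτ : a ∉ τ := by
        intro h
        rw [huval, huval, if_pos haσ, if_pos h] at huz
        exact lt_irrefl _ huz
      have hval : ∀ b : Fin n, indicatorVec τ b - indicatorVec σ b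
          = c * ((if b = i₀ then (1:ℝ) else 0) - (if b = j₀ then 1 else 0)) := by
        intro b
        have h' := congrFun hcvec b
        simpa [Pi.sub_apply, Pi.smul_apply, smul_eq_mul, Pi.single_apply] using h'
      have hvala : indicatorVec τ a - indicatorVec σ a = -1 := by
        simp [indicatorVec_apply, haσ, haτ]
      obtain ⟨j, hjne, hjval, hother⟩ : ∃ j : Fin n, j ≠ a ∧
          indicatorVec τ j - indicatorVec σ j = 1 ∧
          (∀ b : Fin n, b ≠ a → b ≠ j → indicatorVec τ b = indicatorVec σ b) := by
        have hva := hval a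
        rw [hvala] at hva
        by_cases hai : a = i₀
        · have haj : a ≠ j₀ := fun h => hij₀ (hai.symm.trans h)
          rw [if_pos hai, if_neg haj] at hva
          have hc : c = -1 := by linarith
          refine ⟨j₀, fun h => haj h.symm, ?_, ?_⟩
          · have h' := hval j₀
            rw [if_neg (fun h : j₀ = i₀ => hij₀ h.symm), if_pos rfl, hc] at h'
            linarith
          · intro b hba hbj
            have h' := hval b
            rw [if_neg (fun h : b = i₀ => hba (h.trans hai.symm)), if_neg hbj] at h'
            linarith
        · by_cases haj : a = j₀
          · rw [if_neg hai, if_pos haj] at hva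
            have hc : c = 1 := by linarith
            refine ⟨i₀, fun h => hai h.symm, ?_, ?_⟩
            · have h' := hval i₀
              rw [if_pos rfl, if_neg (fun h : i₀ = j₀ => hij₀ h), hc] at h'
              linarith
            · intro b hba hbj
              have h' := hval b
              rw [if_neg hbj, if_neg (fun h : b = j₀ => hba (h.trans haj.symm))] at h'
              linarith
          · exfalso
            rw [if_neg hai, if_neg haj] at hva
            norm_num at hva
      have hjτσ : j ∈ τ ∧ j ∉ σ := by
        by_cases h1 : j ∈ τ
        · by_cases h2 : j ∈ σ
          · exfalso; simp [indicatorVec_apply, h1, h2] at hjval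
          · exact ⟨h1, h2⟩
        · exfalso
          by_cases h2 : j ∈ σ <;> simp [indicatorVec_apply, h1, h2] at hjval
          · linarith
      have hiff : ∀ b : Fin n, b ≠ a → b ≠ j → (b ∈ τ ↔ b ∈ σ) := by
        intro b h1 h2
        have h3 := hother b h1 h2
        by_cases hbτ : b ∈ τ <;> by_cases hbσ'' : b ∈ σ <;>
          simp [indicatorVec_apply, hbτ, hbσ''] at h3 ⊢
      have hjσ'' : j ∈ σ' := by
        rcases Finset.mem_union.1 (hτsub hjτσ.1) with h | h
        · exact absurd h hjτσ.2
        · exact h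
      have hτset : insert j ((↑σ : Set (Fin n)) \ {a}) = ↑τ := by
        ext b
        simp only [Set.mem_insert_iff, Set.mem_diff, Finset.mem_coe, Set.mem_singleton_iff]
        constructor
        · rintro (rfl | ⟨hbσ, hba⟩)
          · exact hjτσ.1
          · by_cases hbj : b = j
            · subst hbj; exact hjτσ.1
            · exact (hiff b hba hbj).2 hbσ
        · intro hbτ
          by_cases hbj : b = j
          · exact Or.inl hbj
          · by_cases hba : b = a
            · exact absurd (hba ▸ hbτ) haτ
            · exact Or.inr ⟨(hiff b hba hbj).1 hbτ, hba⟩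
      exact ⟨j, ⟨hjσ'', hjτσ.2⟩, τ, hτB, hτset⟩
    obtain ⟨σ₀, hσ₀⟩ := hne
    refine ⟨Matroid.ofIsBaseOfFinite Set.finite_univ (fun s => ∃ σ'' ∈ B, s = ↑σ'')
      ⟨↑σ₀, σ₀, hσ₀, rfl⟩ hexch (fun s _ => Set.subset_univ s), rfl, fun s => ?_⟩
    rw [Matroid.ofIsBaseOfFinite_isBase]
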